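/- Second-order expansion of the loss along MPGD iterates (Lemma E.1): under the stated smoothness, for every fixed k ∈ ℕ, R̂(x_k^ε) = R̂(x̄_k) + ε ⟨∇R̂(x̄_k), φ_k⟩ + ε² ( ⟨∇R̂(x̄_k), ψ_k⟩ + (1/2) ⟨φ_k, ∇²R̂(x̄_k) φ_k⟩ ) + O(ε³) as ε → 0⁺. -/

import Mathlib

open Filter Topology Asymptotics
open scoped RealInnerProductSpace

section Helpers

variable {E F G : Type*} [NormedAddCommGroup E] [NormedSpace ℝ E]
  [NormedAddCommGroup F] [NormedSpace ℝ F] [NormedAddCommGroup G] [NormedSpace ℝ G]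

/-- Big-O of a bilinear application. -/
lemma bigO_bilin (B : E →L[ℝ] F →L[ℝ] G) {l : Filter ℝ} {f : ℝ → E} {g : ℝ → F}
    {a b : ℝ → ℝ} (hf : f =O[l] a) (hg : g =O[l] b) :
    (fun t => B (f t) (g t)) =O[l] fun t => a t * b t := by
  obtain ⟨c₁, hc₁⟩ := hf.bound
  obtain ⟨c₂, hc₂⟩ := hg.bound
  rw [isBigO_iff]
  refine ⟨‖B‖ * c₁ * c₂, ?_⟩
  filter_upwards [hc₁, hc₂] with t h1 h2
  have hc₁' : (0:ℝ) ≤ c₁ * ‖a t‖ := le_trans (norm_nonneg _) h1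
  calc ‖B (f t) (g t)‖ ≤ ‖B‖ * ‖f t‖ * ‖g t‖ := B.le_opNorm₂ _ _
    _ ≤ ‖B‖ * (c₁ * ‖a t‖) * (c₂ * ‖b t‖) :=
        mul_le_mul (mul_le_mul le_rfl h1 (norm_nonneg _) (ContinuousLinearMap.opNorm_nonneg _)) h2
          (norm_nonneg _) (mul_nonneg (ContinuousLinearMap.opNorm_nonneg _) hc₁')
    _ = ‖B‖ * c₁ * c₂ * (‖a t‖ * ‖b t‖) := by ring
    _ = ‖B‖ * c₁ * c₂ * ‖a t * b t‖ := by rw [norm_mul]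

/-- First-order Taylor with quadratic remainder bound, for `C²` functions. -/
lemma taylor_one {g : E → F} (hg : ContDiff ℝ 2 g) (a : E) :
    ∃ C r : ℝ, 0 ≤ C ∧ 0 < r ∧ ∀ h : E, ‖h‖ ≤ r →
      ‖g (a + h) - g a - fderiv ℝ g a h‖ ≤ C * ‖h‖ ^ 2 := by
  have h1 : ContDiff ℝ 1 (fderiv ℝ g) := hg.fderiv_right (by norm_num)
  obtain ⟨K, t, ht, hK⟩ := h1.contDiffAt.exists_lipschitzOnWith (x := a)
  obtain ⟨r, hr, hball⟩ := Metric.nhds_basis_closedBall.mem_iff.1 ht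
  refine ⟨K, r, K.coe_nonneg, hr, fun h hh => ?_⟩
  have hdiff : Differentiable ℝ g := hg.differentiable (by norm_num)
  have hmem : ∀ x ∈ Metric.closedBall a ‖h‖, x ∈ t := fun x hx =>
    hball (Metric.closedBall_subset_closedBall hh hx)
  have key := (convex_closedBall a ‖h‖).norm_image_sub_le_of_norm_hasFDerivWithin_le
    (f := fun x => g x - fderiv ℝ g a x)
    (f' := fun x => fderiv ℝ g x - fderiv ℝ g a)
    (C := (K : ℝ) * ‖h‖) (x := a) (y := a + h)
    (fun x _ => ((hdiff x).hasFDerivAt.sub (fderiv ℝ g a).hasFDerivAt).hasFDerivWithinAt)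
    (fun x hx => by
      have hd := hK.dist_le_mul x (hmem x hx) a (hmem a (Metric.mem_closedBall_self (norm_nonneg _)))
      rw [dist_eq_norm, dist_eq_norm] at hd
      have hx' : ‖x - a‖ ≤ ‖h‖ := by simpa [dist_eq_norm] using hx
      exact hd.trans (mul_le_mul_of_nonneg_left hx' K.coe_nonneg))
    (Metric.mem_closedBall_self (norm_nonneg _))
    (by simp [Metric.mem_closedBall, dist_eq_norm])
  have e1 : (g (a + h) - fderiv ℝ g a (a + h)) - (g a - fderiv ℝ g a a)
      = g (a + h) - g a - fderiv ℝ g a h := by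
    rw [map_add]; abel
  rw [e1] at key
  calc ‖g (a + h) - g a - fderiv ℝ g a h‖ ≤ (K : ℝ) * ‖h‖ * ‖a + h - a‖ := key
    _ = K * ‖h‖ ^ 2 := by rw [add_sub_cancel_left]; ring

/-- Second-order Taylor with cubic remainder bound, for `C³` functions. -/
lemma taylor_two {g : E → F} (hg : ContDiff ℝ 3 g) (a : E) :
    ∃ C r : ℝ, 0 ≤ C ∧ 0 < r ∧ ∀ h : E, ‖h‖ ≤ r →
      ‖g (a + h) - g a - fderiv ℝ g a h
        - (2:ℝ)⁻¹ • fderiv ℝ (fderiv ℝ g) a h h‖ ≤ C * ‖h‖ ^ 3 := by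
  set G' := fderiv ℝ g with hG'
  set B := fderiv ℝ G' a with hB
  have hG2 : ContDiff ℝ 2 G' := hg.fderiv_right (by norm_num)
  obtain ⟨C₁, r, hC₁, hr, hb⟩ := taylor_one hG2 a
  have hdiff : Differentiable ℝ g := hg.differentiable (by norm_num)
  have hdiffG : Differentiable ℝ G' := hG2.differentiable (by norm_num)
  have symm : ∀ v w, B v w = B w v :=
    second_derivative_symmetric (fun y => (hdiff y).hasFDerivAt) (hdiffG a).hasFDerivAt
  set Fn := fun x => g x - G' a x - (2:ℝ)⁻¹ • (B (x - a)) (x - a) with hFn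
  have hF' : ∀ x : E, HasFDerivAt Fn (G' x - G' a - B (x - a)) x := by
    intro x
    have hu : HasFDerivAt (fun y : E => y - a) (ContinuousLinearMap.id ℝ E) x :=
      (hasFDerivAt_id x).sub_const a
    have hc : HasFDerivAt (fun y : E => B (y - a)) B x := by
      have h0 := B.hasFDerivAt.comp x hu
      rwa [ContinuousLinearMap.comp_id] at h0
    have hq := hc.clm_apply hu
    have hflip : B.flip (x - a) = B (x - a) := by
      ext v; exact symm v (x - a)
    have hq2 : HasFDerivAt (fun y : E => (2:ℝ)⁻¹ • (B (y - a)) (y - a)) (B (x - a)) x := by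
      have := hq.const_smul (2:ℝ)⁻¹
      convert this using 1
      · rfl
      rw [hflip, ContinuousLinearMap.comp_id, ← two_smul ℝ (B (x-a)), smul_smul]
      norm_num
    exact ((hdiff x).hasFDerivAt.sub (G' a).hasFDerivAt).sub hq2
  refine ⟨C₁, r, hC₁, hr, fun h hh => ?_⟩
  have key := (convex_closedBall a ‖h‖).norm_image_sub_le_of_norm_hasFDerivWithin_le
    (f := Fn) (f' := fun x => G' x - G' a - B (x - a))
    (C := C₁ * ‖h‖ ^ 2) (x := a) (y := a + h)
    (fun x _ => (hF' x).hasFDerivWithinAt)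
    (fun x hx => by
      have hx' : ‖x - a‖ ≤ ‖h‖ := by simpa [dist_eq_norm] using hx
      have := hb (x - a) (hx'.trans hh)
      rw [add_sub_cancel] at this
      calc ‖G' x - G' a - B (x - a)‖ ≤ C₁ * ‖x - a‖ ^ 2 := this
        _ ≤ C₁ * ‖h‖ ^ 2 := by
            have : ‖x - a‖ ^ 2 ≤ ‖h‖ ^ 2 := by
              exact pow_le_pow_left₀ (norm_nonneg _) hx' 2
            exact mul_le_mul_of_nonneg_left this hC₁)
    (Metric.mem_closedBall_self (norm_nonneg _))
    (by simp [Metric.mem_closedBall, dist_eq_norm])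
  have e1 : Fn (a + h) - Fn a
      = g (a + h) - g a - G' a h - (2:ℝ)⁻¹ • (B h) h := by
    simp only [hFn, add_sub_cancel_left, sub_self, map_zero,
      ContinuousLinearMap.zero_apply, smul_zero, map_add]
    abel
  rw [e1] at key
  calc ‖g (a + h) - g a - G' a h - (2:ℝ)⁻¹ • (B h) h‖ ≤ C₁ * ‖h‖ ^ 2 * ‖a + h - a‖ := key
    _ = C₁ * ‖h‖ ^ 3 := by rw [add_sub_cancel_left]; ring

/-- Second-order Taylor remainder along a curve `hv ε = O(ε)` is `O(ε³)` as `ε → 0⁺`. -/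
lemma remainder_bigO {f : E → F} (hf : ContDiff ℝ 3 f) (a : E) {hv : ℝ → E}
    (hhv : hv =O[𝓝[>] (0:ℝ)] fun ε => ε ^ 1) :
    (fun ε => f (a + hv ε) - f a - fderiv ℝ f a (hv ε)
      - (2:ℝ)⁻¹ • fderiv ℝ (fderiv ℝ f) a (hv ε) (hv ε)) =O[𝓝[>] (0:ℝ)] fun ε => ε ^ 3 := by
  obtain ⟨C, r, hC, hr, hb⟩ := taylor_two hf a
  have h0 : Tendsto (fun ε : ℝ => ε ^ 1) (𝓝[>] (0:ℝ)) (𝓝 0) := by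
    have h1 : Tendsto (fun ε : ℝ => ε ^ 1) (𝓝 (0:ℝ)) (𝓝 ((0:ℝ) ^ 1)) :=
      (continuous_pow 1).tendsto (0:ℝ)
    simpa using h1.mono_left nhdsWithin_le_nhds
  have htend : Tendsto hv (𝓝[>] (0:ℝ)) (𝓝 0) := hhv.trans_tendsto h0
  have hsmall : ∀ᶠ ε in 𝓝[>] (0:ℝ), ‖hv ε‖ ≤ r := by
    filter_upwards [htend.eventually (Metric.closedBall_mem_nhds (0:E) hr)] with ε hε
    simpa [mem_closedBall_zero_iff] using hε
  have step1 : (fun ε => f (a + hv ε) - f a - fderiv ℝ f a (hv ε)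
      - (2:ℝ)⁻¹ • fderiv ℝ (fderiv ℝ f) a (hv ε) (hv ε)) =O[𝓝[>] (0:ℝ)]
      fun ε => ‖hv ε‖ ^ 3 := by
    refine IsBigO.of_bound C ?_
    filter_upwards [hsmall] with ε hε
    have := hb (hv ε) hε
    calc ‖f (a + hv ε) - f a - fderiv ℝ f a (hv ε)
        - (2:ℝ)⁻¹ • fderiv ℝ (fderiv ℝ f) a (hv ε) (hv ε)‖ ≤ C * ‖hv ε‖ ^ 3 := this
      _ ≤ C * ‖‖hv ε‖ ^ 3‖ := by
          rw [Real.norm_eq_abs, abs_of_nonneg (by positivity)]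
  have step2 : (fun ε => ‖hv ε‖ ^ 3) =O[𝓝[>] (0:ℝ)] fun ε => (ε ^ 1) ^ 3 :=
    hhv.norm_left.pow 3
  exact (step1.trans step2).congr (fun _ => rfl) (fun ε => by ring)

end Helpers

section Grad

variable {E : Type*} [NormedAddCommGroup E] [InnerProductSpace ℝ E] [CompleteSpace E]

lemma my_contDiff_gradient {R : E → ℝ} (hR : ContDiff ℝ 4 R) :
    ContDiff ℝ 3 (gradient R) := by
  have h1 : ContDiff ℝ 3 (fderiv ℝ R) := hR.fderiv_right (by norm_num)
  have h2 : ContDiff ℝ 3 (fun y : StrongDual ℝ E => (InnerProductSpace.toDual ℝ E).symm y) :=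
    (InnerProductSpace.toDual ℝ E).symm.toContinuousLinearEquiv.toContinuousLinearMap.contDiff
  exact h2.comp h1

lemma my_inner_gradient (R : E → ℝ) (x v : E) :
    ⟪gradient R x, v⟫ = fderiv ℝ R x v :=
  InnerProductSpace.toDual_symm_apply

lemma my_snd_deriv {R : E → ℝ} (hR : ContDiff ℝ 4 R) (x u v : E) :
    fderiv ℝ (fderiv ℝ R) x u v = ⟪fderiv ℝ (gradient R) x u, v⟫ := by
  set A : E →L[ℝ] (E →L[ℝ] ℝ) :=
    (InnerProductSpace.toDual ℝ E).toContinuousLinearEquiv.toContinuousLinearMap with hA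
  have hfun : fderiv ℝ R = fun y => A (gradient R y) := by
    funext y
    simp [hA, gradient]
  have hgdiff : DifferentiableAt ℝ (gradient R) x :=
    ((my_contDiff_gradient hR).differentiable (by norm_num)).differentiableAt
  have hcomp : HasFDerivAt (fun y => A (gradient R y))
      (A.comp (fderiv ℝ (gradient R) x)) x :=
    A.hasFDerivAt.comp x hgdiff.hasFDerivAt
  rw [hfun, hcomp.fderiv]
  simp [hA]

end Grad

section Basis

variable {d : ℕ}

lemma my_sum_single (x : EuclideanSpace ℝ (Fin d)) :
    ∑ i, x i • EuclideanSpace.single i (1:ℝ) = x := by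
  have := (EuclideanSpace.basisFun (Fin d) ℝ).sum_repr x
  simpa [EuclideanSpace.basisFun_apply, EuclideanSpace.basisFun_repr] using this

lemma my_bilin_sum
    (T : EuclideanSpace ℝ (Fin d) →L[ℝ] EuclideanSpace ℝ (Fin d) →L[ℝ] EuclideanSpace ℝ (Fin d))
    (x : EuclideanSpace ℝ (Fin d)) :
    ∑ i, ∑ j, (x i * x j) • T (EuclideanSpace.single i 1) (EuclideanSpace.single j 1)
      = T x x := by
  have h2 : ∀ u : EuclideanSpace ℝ (Fin d), T u x = ∑ j, x j • T u (EuclideanSpace.single j 1) := by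
    intro u
    conv_lhs => rw [← my_sum_single x]
    rw [map_sum]
    exact Finset.sum_congr rfl fun j _ => by rw [map_smul]
  have h1 : ∀ u : EuclideanSpace ℝ (Fin d),
      T x u = ∑ i, x i • T (EuclideanSpace.single i 1) u := by
    intro u
    conv_lhs => rw [← my_sum_single x]
    rw [map_sum, ContinuousLinearMap.sum_apply]
    exact Finset.sum_congr rfl fun i _ => by
      rw [map_smul, ContinuousLinearMap.smul_apply]
  rw [h1 x]
  refine Finset.sum_congr rfl fun i _ => ?_
  rw [h2, Finset.smul_sum]
  refine Finset.sum_congr rfl fun j _ => ?_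
  rw [smul_smul]

end Basis

set_option maxHeartbeats 1600000 in
/-- Second-order expansion of the loss along MPGD iterates (Lemma E.1): for fixed `k`,
`R̂(x_k^ε) = R̂(x̄_k) + ε ⟨∇R̂(x̄_k), φ_k⟩
  + ε² (⟨∇R̂(x̄_k), ψ_k⟩ + (1/2) ⟨φ_k, ∇²R̂(x̄_k) φ_k⟩) + O(ε³)` as `ε → 0⁺`. -/
theorem stmt_11 {d : ℕ} (m : ℝ) (hm : 0 < m)
    (α₁ α₂ : ℝ) (hα₁ : α₁ ∈ Set.Ioo (1:ℝ) 2) (hα₂ : α₂ ∈ Set.Ioo (1:ℝ) 2)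
    (μ₀ : ℝ) (hμ₀ : 0 ≤ μ₀) (σ₀ : ℝ)
    (x₀ : EuclideanSpace ℝ (Fin d))
    (w₁ : ℕ → ℝ) (w₂ : ℕ → EuclideanSpace ℝ (Fin d))
    (hw₁ : ∃ B : ℝ, ∀ k, |w₁ k| ≤ B) (hw₂ : ∃ B : ℝ, ∀ k, ‖w₂ k‖ ≤ B)
    (R : EuclideanSpace ℝ (Fin d) → ℝ)
    -- `∇R` has Lipschitz continuous partial derivatives up to order three (inclusive):
    (hR : ContDiff ℝ 4 R)
    (hRLip : ∀ j : ℕ, 1 ≤ j → j ≤ 4 → ∃ L : NNReal, LipschitzWith L (iteratedFDeriv ℝ j R))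
    -- perturbed iterates
    (xε : ℝ → ℕ → EuclideanSpace ℝ (Fin d))
    (hxε0 : ∀ ε : ℝ, 0 < ε → xε ε 0 = x₀)
    (hxε : ∀ ε : ℝ, 0 < ε → ∀ k : ℕ,
      xε ε (k + 1) = xε ε k - (1 / m) • gradient R (xε ε k)
        - (ε * μ₀ * m ^ (-1 / α₁) * w₁ k) • xε ε k
        + (ε * σ₀ * m ^ (-1 / α₂)) • w₂ k)
    -- unperturbed GD iterates
    (xbar : ℕ → EuclideanSpace ℝ (Fin d))
    (hxbar0 : xbar 0 = x₀)
    (hxbar : ∀ k : ℕ, xbar (k + 1) = xbar k - (1 / m) • gradient R (xbar k))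
    -- Jacobians J_k = I − (1/m)∇²R(x̄_k)
    (J : ℕ → EuclideanSpace ℝ (Fin d) →L[ℝ] EuclideanSpace ℝ (Fin d))
    (hJ : ∀ k : ℕ, J k = ContinuousLinearMap.id ℝ (EuclideanSpace ℝ (Fin d))
      - (1 / m) • fderiv ℝ (gradient R) (xbar k))
    -- first-order process
    (φ : ℕ → EuclideanSpace ℝ (Fin d))
    (hφ0 : φ 0 = 0)
    (hφ : ∀ k : ℕ, φ (k + 1) = J k (φ k)
      - (μ₀ * m ^ (-1 / α₁) * w₁ k) • xbar k + (σ₀ * m ^ (-1 / α₂)) • w₂ k)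
    -- second-order process
    (ψ : ℕ → EuclideanSpace ℝ (Fin d))
    (hψ0 : ψ 0 = 0)
    (hψ : ∀ k : ℕ, ψ (k + 1) = J k (ψ k)
      - (1 / (2 * m)) • (∑ i : Fin d, ∑ j : Fin d, ((φ k) i * (φ k) j) •
          fderiv ℝ (fderiv ℝ (gradient R)) (xbar k)
            (EuclideanSpace.single i 1) (EuclideanSpace.single j 1))
      - (μ₀ * m ^ (-1 / α₁) * w₁ k) • φ k)
    (k : ℕ) :
    (fun ε : ℝ => R (xε ε k) - (R (xbar k) + ε * ⟪gradient R (xbar k), φ k⟫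
        + ε ^ 2 * (⟪gradient R (xbar k), ψ k⟫
          + (1 / 2) * ⟪φ k, fderiv ℝ (gradient R) (xbar k) (φ k)⟫))) =O[𝓝[>] 0]
      fun ε : ℝ => ε ^ 3 := by
  have hg3 : ContDiff ℝ 3 (gradient R) := my_contDiff_gradient hR
  have hIoo : ∀ᶠ ε in 𝓝[>] (0:ℝ), ε ∈ Set.Ioo (0:ℝ) 1 :=
    Ioo_mem_nhdsGT_of_mem ⟨le_rfl, zero_lt_one⟩
  have hmono : ∀ i j : ℕ, i ≤ j → (fun ε : ℝ => ε ^ j) =O[𝓝[>] (0:ℝ)] fun ε => ε ^ i := by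
    intro i j hij
    refine IsBigO.of_bound 1 ?_
    filter_upwards [hIoo] with ε hε
    rw [one_mul, Real.norm_eq_abs, Real.norm_eq_abs,
      abs_of_nonneg (pow_nonneg hε.1.le j), abs_of_nonneg (pow_nonneg hε.1.le i)]
    exact pow_le_pow_of_le_one hε.1.le hε.2.le hij
  have hsmulO : ∀ (n : ℕ) (v : EuclideanSpace ℝ (Fin d)),
      (fun ε : ℝ => ε ^ n • v) =O[𝓝[>] (0:ℝ)] fun ε => ε ^ n := fun n v =>
    IsBigO.of_bound ‖v‖ (Eventually.of_forall fun ε => le_of_eq (by rw [norm_smul, mul_comm]))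
  -- main induction: xε ε n = x̄ n + ε φ n + ε² ψ n + O(ε³)
  have key : ∀ n : ℕ, (fun ε : ℝ => xε ε n - xbar n - ε • φ n - ε ^ 2 • ψ n)
      =O[𝓝[>] (0:ℝ)] fun ε => ε ^ 3 := by
    intro n
    induction n with
    | zero =>
      have hz : (fun ε : ℝ => xε ε 0 - xbar 0 - ε • φ 0 - ε ^ 2 • ψ 0)
          =ᶠ[𝓝[>] (0:ℝ)] fun _ => (0 : EuclideanSpace ℝ (Fin d)) := by
        filter_upwards [self_mem_nhdsWithin] with ε hε
        rw [hxε0 ε hε, hxbar0, hφ0, hψ0]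
        simp
      exact hz.trans_isBigO (isBigO_zero _ _)
    | succ k ih =>
      have hφO : (fun ε : ℝ => ε • φ k) =O[𝓝[>] (0:ℝ)] fun ε => ε ^ 1 :=
        IsBigO.of_bound ‖φ k‖ (Eventually.of_forall fun ε =>
          le_of_eq (by rw [pow_one, norm_smul, mul_comm]))
      have hψO : (fun ε : ℝ => ε ^ 2 • ψ k) =O[𝓝[>] (0:ℝ)] fun ε => ε ^ 2 := hsmulO 2 (ψ k)
      have hd2 : (fun ε : ℝ => (xε ε k - xbar k) - ε • φ k) =O[𝓝[>] (0:ℝ)] fun ε => ε ^ 2 := by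
        have heq : ∀ ε : ℝ, (ε ^ 2 • ψ k) + (xε ε k - xbar k - ε • φ k - ε ^ 2 • ψ k)
            = (xε ε k - xbar k) - ε • φ k := fun ε => by abel
        exact (hψO.add (ih.trans (hmono 2 3 (by norm_num)))).congr heq fun _ => rfl
      have hh1 : (fun ε : ℝ => xε ε k - xbar k) =O[𝓝[>] (0:ℝ)] fun ε => ε ^ 1 := by
        have heq : ∀ ε : ℝ, (ε • φ k) + ((ε ^ 2 • ψ k)
            + (xε ε k - xbar k - ε • φ k - ε ^ 2 • ψ k)) = xε ε k - xbar k := fun ε => by abel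
        exact (hφO.add ((hψO.trans (hmono 1 2 (by norm_num))).add (ih.trans (hmono 1 3 (by norm_num))))).congr
          heq fun _ => rfl
      set H := fderiv ℝ (gradient R) (xbar k) with hH
      set T := fderiv ℝ (fderiv ℝ (gradient R)) (xbar k) with hT
      have hRem0 := remainder_bigO hg3 (xbar k) hh1
      have hRem : (fun ε : ℝ => gradient R (xε ε k) - gradient R (xbar k)
          - H (xε ε k - xbar k)
          - (2:ℝ)⁻¹ • T (xε ε k - xbar k) (xε ε k - xbar k)) =O[𝓝[>] (0:ℝ)]
          fun ε => ε ^ 3 := by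
        refine hRem0.congr (fun ε => ?_) fun _ => rfl
        rw [show xbar k + (xε ε k - xbar k) = xε ε k by abel]
      have t2 : (fun ε : ℝ => (1 / m) • H (xε ε k - xbar k - ε • φ k - ε ^ 2 • ψ k))
          =O[𝓝[>] (0:ℝ)] fun ε => ε ^ 3 :=
        ((H.isBoundedLinearMap.isBigO_comp _).trans ih).const_smul_left (1 / m)
      have hbil1 := (bigO_bilin T hh1 hd2).congr (f₂ := fun ε : ℝ =>
          T (xε ε k - xbar k) ((xε ε k - xbar k) - ε • φ k))
        (fun _ => rfl) (fun ε : ℝ => by ring : ∀ ε : ℝ, ε ^ 1 * ε ^ 2 = ε ^ 3)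
      have hbil2 := (bigO_bilin T hd2 hφO).congr (f₂ := fun ε : ℝ =>
          T ((xε ε k - xbar k) - ε • φ k) (ε • φ k))
        (fun _ => rfl) (fun ε : ℝ => by ring : ∀ ε : ℝ, ε ^ 2 * ε ^ 1 = ε ^ 3)
      have t3core : (fun ε : ℝ => T (xε ε k - xbar k) (xε ε k - xbar k)
          - ε ^ 2 • T (φ k) (φ k)) =O[𝓝[>] (0:ℝ)] fun ε => ε ^ 3 := by
        refine (hbil1.add hbil2).congr (fun ε => ?_) fun _ => rfl
        simp only [map_sub, map_smul, ContinuousLinearMap.sub_apply,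
          ContinuousLinearMap.smul_apply]
        module
      have t3 := t3core.const_smul_left (1 / (2 * m))
      have t4 := hRem.const_smul_left (1 / m)
      have hsc : (fun ε : ℝ => ε * μ₀ * m ^ (-1 / α₁) * w₁ k) =O[𝓝[>] (0:ℝ)]
          fun ε => ε ^ 1 :=
        IsBigO.of_bound (|μ₀ * m ^ (-1 / α₁) * w₁ k|) (Eventually.of_forall fun ε =>
          le_of_eq (by rw [pow_one, Real.norm_eq_abs, Real.norm_eq_abs, ← abs_mul]; ring_nf))
      have t5 : (fun ε : ℝ => (ε * μ₀ * m ^ (-1 / α₁) * w₁ k) •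
          ((xε ε k - xbar k) - ε • φ k)) =O[𝓝[>] (0:ℝ)] fun ε => ε ^ 3 := by
        refine (hsc.smul hd2).congr (fun _ => rfl) fun ε => ?_
        rw [smul_eq_mul]; ring
      have total := (((ih.sub t2).sub t3).sub t4).sub t5
      refine IsBigO.congr' total ?_ EventuallyEq.rfl
      filter_upwards [self_mem_nhdsWithin] with ε (hε : ε ∈ Set.Ioi (0:ℝ))
      rw [hxε ε hε k, hxbar k, hφ k, hψ k, hJ k, my_bilin_sum]
      simp only [Pi.smul_apply, ContinuousLinearMap.sub_apply,
        ContinuousLinearMap.smul_apply, ContinuousLinearMap.id_apply,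
        ContinuousLinearMap.coe_sub', Pi.sub_apply, map_sub, map_smul]
      module
  -- final Taylor expansion of R
  set H := fderiv ℝ (gradient R) (xbar k) with hH
  have hφO : (fun ε : ℝ => ε • φ k) =O[𝓝[>] (0:ℝ)] fun ε => ε ^ 1 :=
    IsBigO.of_bound ‖φ k‖ (Eventually.of_forall fun ε =>
      le_of_eq (by rw [pow_one, norm_smul, mul_comm]))
  have hψO : (fun ε : ℝ => ε ^ 2 • ψ k) =O[𝓝[>] (0:ℝ)] fun ε => ε ^ 2 := hsmulO 2 (ψ k)
  have hd2 : (fun ε : ℝ => (xε ε k - xbar k) - ε • φ k) =O[𝓝[>] (0:ℝ)] fun ε => ε ^ 2 := by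
    have heq : ∀ ε : ℝ, (ε ^ 2 • ψ k) + (xε ε k - xbar k - ε • φ k - ε ^ 2 • ψ k)
        = (xε ε k - xbar k) - ε • φ k := fun ε => by abel
    exact (hψO.add ((key k).trans (hmono 2 3 (by norm_num)))).congr heq fun _ => rfl
  have hh1 : (fun ε : ℝ => xε ε k - xbar k) =O[𝓝[>] (0:ℝ)] fun ε => ε ^ 1 := by
    have heq : ∀ ε : ℝ, (ε • φ k) + ((ε ^ 2 • ψ k)
        + (xε ε k - xbar k - ε • φ k - ε ^ 2 • ψ k)) = xε ε k - xbar k := fun ε => by abel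
    exact (hφO.add ((hψO.trans (hmono 1 2 (by norm_num))).add ((key k).trans (hmono 1 3 (by norm_num))))).congr
      heq fun _ => rfl
  have hR3 : ContDiff ℝ 3 R := hR.of_le (by norm_num)
  have o1 := remainder_bigO hR3 (xbar k) hh1
  have o2 : (fun ε : ℝ => ⟪gradient R (xbar k), xε ε k - xbar k - ε • φ k - ε ^ 2 • ψ k⟫)
      =O[𝓝[>] (0:ℝ)] fun ε => ε ^ 3 := by
    have h := ((innerSL ℝ (gradient R (xbar k))).isBoundedLinearMap.isBigO_comp
      (f := fun ε : ℝ => xε ε k - xbar k - ε • φ k - ε ^ 2 • ψ k) (𝓝[>] (0:ℝ))).trans (key k)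
    exact h.congr (fun ε => by rw [innerSL_apply_apply]) fun _ => rfl
  have Bi : EuclideanSpace ℝ (Fin d) →L[ℝ] EuclideanSpace ℝ (Fin d) →L[ℝ] ℝ :=
    (innerSL ℝ).comp H
  have o3 : (fun ε : ℝ => ⟪H (xε ε k - xbar k), xε ε k - xbar k⟫
      - ε ^ 2 * ⟪H (φ k), φ k⟫) =O[𝓝[>] (0:ℝ)] fun ε => ε ^ 3 := by
    have hbil1 := (bigO_bilin ((innerSL ℝ).comp H) hh1 hd2).congr (f₂ := fun ε : ℝ =>
        ((innerSL ℝ).comp H) (xε ε k - xbar k) ((xε ε k - xbar k) - ε • φ k))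
      (fun _ => rfl) (fun ε : ℝ => by ring : ∀ ε : ℝ, ε ^ 1 * ε ^ 2 = ε ^ 3)
    have hbil2 := (bigO_bilin ((innerSL ℝ).comp H) hd2 hφO).congr (f₂ := fun ε : ℝ =>
        ((innerSL ℝ).comp H) ((xε ε k - xbar k) - ε • φ k) (ε • φ k))
      (fun _ => rfl) (fun ε : ℝ => by ring : ∀ ε : ℝ, ε ^ 2 * ε ^ 1 = ε ^ 3)
    refine (hbil1.add hbil2).congr (fun ε => ?_) fun _ => rfl
    simp only [ContinuousLinearMap.coe_comp', Function.comp_apply,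
      map_sub, map_smul, ContinuousLinearMap.sub_apply, ContinuousLinearMap.smul_apply,
      innerSL_apply_apply, smul_eq_mul, inner_sub_left, inner_sub_right,
      real_inner_smul_left, real_inner_smul_right]
    ring
  have hident : ∀ ε : ℝ, R (xε ε k) - (R (xbar k) + ε * ⟪gradient R (xbar k), φ k⟫
      + ε ^ 2 * (⟪gradient R (xbar k), ψ k⟫ + (1 / 2) * ⟪φ k, H (φ k)⟫))
      = (R (xbar k + (xε ε k - xbar k)) - R (xbar k)
          - fderiv ℝ R (xbar k) (xε ε k - xbar k)
          - (2:ℝ)⁻¹ • fderiv ℝ (fderiv ℝ R) (xbar k) (xε ε k - xbar k) (xε ε k - xbar k))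
        + ⟪gradient R (xbar k), xε ε k - xbar k - ε • φ k - ε ^ 2 • ψ k⟫
        + 2⁻¹ * (⟪H (xε ε k - xbar k), xε ε k - xbar k⟫ - ε ^ 2 * ⟪H (φ k), φ k⟫) := by
    intro ε
    rw [show xbar k + (xε ε k - xbar k) = xε ε k by abel]
    rw [my_snd_deriv hR, ← my_inner_gradient R (xbar k)]
    rw [real_inner_comm (φ k) (H (φ k))]
    simp only [inner_sub_right, real_inner_smul_right, smul_eq_mul]
    ring
  have total := (o1.add o2).add (o3.const_mul_left 2⁻¹)
  exact total.congr (fun ε => (hident ε).symm) fun _ => rfl
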